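/- arXiv:2410.03129 — 8 statements merged into one kernel-verified Lean document; each statement's English description precedes it below -/
import Mathlib

section
/- Let m ≥ 1, w ∈ ℝ^m, B ∈ {−1,+1}^m, and μ, α ∈ ℝ, and let 𝟙 ∈ ℝ^m be the all-ones vector. Define the refined parameters μ' = (1/m)·Σ_{j=1}^m (w_j − αB_j) and α' = (1/m)·⟨B, w − μ'𝟙⟩. Then ‖w − μ'𝟙 − α'B‖² = ‖w − μ𝟙 − αB‖² − m·((μ' − μ)² + (α' − α)²); in particular the binarization error does not increase after sequentially refining μ and then α. -/
open scoped RealInnerProductSpace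

/-- One ARB iteration on the pair `(μ, α)`: refining `μ` to the mean of `w − αB`
and then `α` to the optimal scaling for the new mean decreases the squared
binarization error by exactly `m·((μ' − μ)² + (α' − α)²)`. -/
theorem arb_mu_alpha_refinement (m : ℕ) (hm : 1 ≤ m)
    (w B : EuclideanSpace ℝ (Fin m))
    (hB : ∀ j, B j = 1 ∨ B j = -1)
    (μ α : ℝ)
    (ones : EuclideanSpace ℝ (Fin m)) (hones : ∀ j, ones j = 1)
    (μ' : ℝ) (hμ' : μ' = (1 / (m : ℝ)) * ∑ j, (w j - α * B j))
    (α' : ℝ) (hα' : α' = (1 / (m : ℝ)) * ⟪B, w - μ' • ones⟫) :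
    ‖w - μ' • ones - α' • B‖ ^ 2 =
      ‖w - μ • ones - α • B‖ ^ 2 - m * ((μ' - μ) ^ 2 + (α' - α) ^ 2) := by
  have hm0 : (m : ℝ) ≠ 0 := by positivity
  have hBB : ∀ j, B j * B j = 1 := by
    intro j; rcases hB j with h | h <;> rw [h] <;> ring
  have hnorm : ∀ x : EuclideanSpace ℝ (Fin m), ‖x‖ ^ 2 = ∑ j, (x j) ^ 2 := by
    intro x
    rw [EuclideanSpace.norm_eq, Real.sq_sqrt (by positivity)]
    simp [sq_abs]
  have happ : ∀ (a b : ℝ) (j : Fin m),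
      (w - a • ones - b • B) j = w j - a - b * B j := by
    intro a b j
    simp [hones j]
  have expand : ∀ a b : ℝ, ‖w - a • ones - b • B‖ ^ 2 =
      (∑ j, (w j) ^ 2) - 2 * a * (∑ j, w j) - 2 * b * (∑ j, w j * B j)
        + 2 * a * b * (∑ j, B j) + m * a ^ 2 + m * b ^ 2 := by
    intro a b
    rw [hnorm]
    have : ∀ j ∈ Finset.univ, ((w - a • ones - b • B) j) ^ 2 =
        (w j) ^ 2 - 2 * a * w j - 2 * b * (w j * B j) + 2 * a * b * B j
          + a ^ 2 + b ^ 2 := by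
      intro j _
      rw [happ a b j]
      linear_combination (b ^ 2) * hBB j
    rw [Finset.sum_congr rfl this]
    simp only [Finset.sum_add_distrib, Finset.sum_sub_distrib, ← Finset.mul_sum,
      Finset.sum_const, Finset.card_univ, Fintype.card_fin, nsmul_eq_mul]
    try ring
  have h1 : (m : ℝ) * μ' = (∑ j, w j) - α * (∑ j, B j) := by
    rw [hμ', Finset.sum_sub_distrib, ← Finset.mul_sum]
    field_simp
  have h2 : (m : ℝ) * α' = (∑ j, w j * B j) - μ' * (∑ j, B j) := by
    rw [hα']
    have : ⟪B, w - μ' • ones⟫ = (∑ j, w j * B j) - μ' * (∑ j, B j) := by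
      rw [PiLp.inner_apply]
      simp only [RCLike.inner_apply, conj_trivial]
      rw [Finset.sum_congr rfl (fun j _ => show (w - μ' • ones) j * B j
        = w j * B j - μ' * B j by simp [hones j]; ring)]
      rw [Finset.sum_sub_distrib, ← Finset.mul_sum]
    rw [this]
    field_simp
  rw [expand, expand]
  linear_combination (2 * (μ' - μ)) * h1 + (2 * (α' - α)) * h2
end

section
/- Let m ≥ 1 and w ∈ ℝ^m, and define the ARB iterates: μ⁰ = (1/m)Σ_j w_j, B⁰ = sign(w − μ⁰𝟙), α⁰ = (1/m)Σ_j |w_j − μ⁰|, and for τ ≥ 0: μ^{τ+1} = (1/m)Σ_j (w_j − α^τ B^τ_j), α^{τ+1} = (1/m)⟨B^τ, w − μ^{τ+1}𝟙⟩, B^{τ+1} = sign(w − μ^{τ+1}𝟙). Define the quantization errors L⁰ = ‖w − α⁰B⁰ − μ⁰𝟙‖² and, for τ ≥ 1, L^τ = ‖w − α^τ B^{τ−1} − μ^τ𝟙‖². Then for every τ ≥ 0, L^τ = L⁰ − m·((α^τ)² − (α⁰)² − (μ^τ − μ⁰)²). -/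
/-- Equality part of Theorem 1 (ARB): along the alternating refined binarization
iterates, the quantization error satisfies
`L^τ = L⁰ − m·((α^τ)² − (α⁰)² − (μ^τ − μ⁰)²)` for every `τ ≥ 0`. -/
theorem arb_quantization_error_formula (m : ℕ) (hm : 1 ≤ m)
    (w : EuclideanSpace ℝ (Fin m))
    (ones : EuclideanSpace ℝ (Fin m)) (hones : ∀ j, ones j = 1)
    (μ α : ℕ → ℝ) (B : ℕ → EuclideanSpace ℝ (Fin m))
    (hμ0 : μ 0 = (1 / (m : ℝ)) * ∑ j, w j)
    (hB : ∀ τ, ∀ j, B τ j = if 0 ≤ w j - μ τ then 1 else -1)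
    (hα0 : α 0 = (1 / (m : ℝ)) * ∑ j, |w j - μ 0|)
    (hμ : ∀ τ, μ (τ + 1) = (1 / (m : ℝ)) * ∑ j, (w j - α τ * B τ j))
    (hα : ∀ τ, α (τ + 1) = (1 / (m : ℝ)) * ∑ j, B τ j * (w j - μ (τ + 1)))
    (L : ℕ → ℝ)
    (hL0 : L 0 = ‖w - α 0 • B 0 - μ 0 • ones‖ ^ 2)
    (hL : ∀ τ, L (τ + 1) = ‖w - α (τ + 1) • B τ - μ (τ + 1) • ones‖ ^ 2) :
    ∀ τ, L τ = L 0 - m * ((α τ) ^ 2 - (α 0) ^ 2 - (μ τ - μ 0) ^ 2) := by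
  have hm' : (m : ℝ) ≠ 0 := by positivity
  -- squared norm as a sum
  have hnorm : ∀ v : EuclideanSpace ℝ (Fin m), ‖v‖ ^ 2 = ∑ j, (v j) ^ 2 := by
    intro v
    rw [EuclideanSpace.norm_eq, Real.sq_sqrt (by positivity)]
    simp [Real.norm_eq_abs, sq_abs]
  have hBsq : ∀ τ j, (B τ j) ^ 2 = 1 := by
    intro τ j; rw [hB]; split <;> norm_num
  have habs : ∀ τ j, B τ j * (w j - μ τ) = |w j - μ τ| := by
    intro τ j; rw [hB]
    split_ifs with h
    · rw [abs_of_nonneg h]; ring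
    · rw [abs_of_neg (lt_of_not_ge h)]; ring
  -- sum of w equals m μ0
  have hS : ∑ j, w j = (m : ℝ) * μ 0 := by
    rw [hμ0]; field_simp
  -- key sum identities
  have hsum0 : ∑ j, B 0 j * (w j - μ 0) = (m : ℝ) * α 0 := by
    rw [hα0]; field_simp
    exact Finset.sum_congr rfl fun j _ => habs 0 j
  have hsumτ : ∀ τ, ∑ j, B τ j * (w j - μ (τ + 1)) = (m : ℝ) * α (τ + 1) := by
    intro τ; rw [hα τ]; field_simp
  -- generic expansion
  have expand : ∀ (a c : ℝ) (t : ℕ),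
      ‖w - a • B t - c • ones‖ ^ 2 =
        (∑ j, (w j) ^ 2) + a ^ 2 * m + c ^ 2 * m
          - 2 * a * (∑ j, B t j * (w j - c)) - 2 * c * (∑ j, w j) := by
    intro a c t
    rw [hnorm]
    have hpt : ∀ j, ((w - a • B t - c • ones) j) ^ 2 =
        (w j) ^ 2 + a ^ 2 + c ^ 2 - 2 * a * (B t j * (w j - c)) - 2 * c * w j := by
      intro j
      have h1 : (w - a • B t - c • ones) j = w j - a * B t j - c * ones j := rfl
      rw [h1, hones j]
      linear_combination a ^ 2 * hBsq t j
    rw [Finset.sum_congr rfl fun j _ => hpt j]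
    simp only [Finset.sum_add_distrib, Finset.sum_sub_distrib, Finset.sum_const,
      Finset.card_univ, Fintype.card_fin, nsmul_eq_mul, ← Finset.mul_sum]
    ring
  have hL0' : L 0 = (∑ j, (w j) ^ 2) - (m : ℝ) * α 0 ^ 2 - (m : ℝ) * μ 0 ^ 2 := by
    rw [hL0, expand, hsum0, hS]; ring
  intro τ
  cases τ with
  | zero => ring
  | succ τ =>
    rw [hL τ, expand, hsumτ τ, hS, hL0']
    ring
end

section
/- Let m ≥ 1 and w ∈ ℝ^m, and define the ARB iterates: μ⁰ = (1/m)Σ_j w_j, B⁰ = sign(w − μ⁰𝟙), α⁰ = (1/m)Σ_j |w_j − μ⁰|, and for τ ≥ 0: μ^{τ+1} = (1/m)Σ_j (w_j − α^τ B^τ_j), α^{τ+1} = (1/m)⟨B^τ, w − μ^{τ+1}𝟙⟩, B^{τ+1} = sign(w − μ^{τ+1}𝟙). Then α^τ ≥ 0 for every τ ≥ 0; more precisely, α^{τ+1} ≥ α^τ · b̄², where b̄ = (1/m)Σ_j B^τ_j. -/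
/-- Nonnegativity invariant of the ARB scaling factors: every iterate `α^τ` is
nonnegative; more precisely `α^{τ+1} ≥ α^τ · b̄²` where `b̄` is the mean of the
entries of `B^τ`. -/
theorem arb_alpha_nonneg (m : ℕ) (hm : 1 ≤ m)
    (w : EuclideanSpace ℝ (Fin m))
    (μ α : ℕ → ℝ) (B : ℕ → EuclideanSpace ℝ (Fin m))
    (hμ0 : μ 0 = (1 / (m : ℝ)) * ∑ j, w j)
    (hB : ∀ τ, ∀ j, B τ j = if 0 ≤ w j - μ τ then 1 else -1)
    (hα0 : α 0 = (1 / (m : ℝ)) * ∑ j, |w j - μ 0|)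
    (hμ : ∀ τ, μ (τ + 1) = (1 / (m : ℝ)) * ∑ j, (w j - α τ * B τ j))
    (hα : ∀ τ, α (τ + 1) = (1 / (m : ℝ)) * ∑ j, B τ j * (w j - μ (τ + 1))) :
    (∀ τ, 0 ≤ α τ) ∧
    (∀ τ, α τ * ((1 / (m : ℝ)) * ∑ j, B τ j) ^ 2 ≤ α (τ + 1)) := by
  have hm' : (0 : ℝ) < m := by exact_mod_cast Nat.lt_of_lt_of_le Nat.zero_lt_one hm
  have key : ∀ τ, α τ * ((1 / (m : ℝ)) * ∑ j, B τ j) ^ 2 ≤ α (τ + 1) := by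
    intro τ
    set S1 : ℝ := ∑ j, B τ j * w j with hS1
    set SB : ℝ := ∑ j, B τ j with hSB
    set Sw : ℝ := ∑ j, w j with hSw
    set Sa : ℝ := ∑ j, |w j - μ τ| with hSa
    -- F1 : S1 - μ τ * SB = Sa
    have F1 : S1 - μ τ * SB = Sa := by
      rw [hS1, hSB, hSa, Finset.mul_sum, ← Finset.sum_sub_distrib]
      refine Finset.sum_congr rfl fun j _ => ?_
      rw [hB]
      split_ifs with h
      · rw [abs_of_nonneg h]; ring
      · rw [abs_of_neg (lt_of_not_ge h)]; ring
    -- F2 : μ (τ+1) = (1/m) * (Sw - α τ * SB)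
    have F2 : μ (τ + 1) = (1 / (m : ℝ)) * (Sw - α τ * SB) := by
      rw [hμ τ, Finset.sum_sub_distrib, ← Finset.mul_sum]
    -- F3 : α (τ+1) = (1/m) * (S1 - μ (τ+1) * SB)
    have F3 : α (τ + 1) = (1 / (m : ℝ)) * (S1 - μ (τ + 1) * SB) := by
      rw [hα τ]
      congr 1
      rw [hS1, hSB, Finset.mul_sum, ← Finset.sum_sub_distrib]
      exact Finset.sum_congr rfl fun j _ => by ring
    -- bounds
    have hSBle : |SB| ≤ (m : ℝ) := by
      calc |SB| ≤ ∑ j, |B τ j| := Finset.abs_sum_le_sum_abs _ _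
        _ = (m : ℝ) := by
            have : ∀ j, |B τ j| = 1 := by
              intro j; rw [hB]; split_ifs <;> simp
            simp [this]
    have hSwle : |Sw - (m : ℝ) * μ τ| ≤ Sa := by
      have : Sw - (m : ℝ) * μ τ = ∑ j, (w j - μ τ) := by
        rw [hSw, Finset.sum_sub_distrib]; simp [mul_comm]
      rw [this]
      exact Finset.abs_sum_le_sum_abs _ _
    obtain ⟨h1, h2⟩ := abs_le.mp hSBle
    obtain ⟨h3, h4⟩ := abs_le.mp hSwle
    have hne : (m : ℝ) ≠ 0 := ne_of_gt hm'
    rw [F3, F2]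
    have expand : 1 / (m : ℝ) * (S1 - 1 / (m : ℝ) * (Sw - α τ * SB) * SB) -
        α τ * (1 / (m : ℝ) * SB) ^ 2 = ((m : ℝ) * S1 - Sw * SB) / (m : ℝ) ^ 2 := by
      field_simp
      ring
    have hSa0 : 0 ≤ Sa := by
      rw [hSa]; exact Finset.sum_nonneg fun j _ => abs_nonneg _
    have hnum : 0 ≤ (m : ℝ) * S1 - Sw * SB := by
      have hS1' : S1 = Sa + μ τ * SB := by linarith [F1]
      rw [hS1']
      nlinarith [mul_le_mul_of_nonneg_left h2 hSa0, mul_le_mul_of_nonneg_left h1 hSa0]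
    have : 0 ≤ ((m : ℝ) * S1 - Sw * SB) / (m : ℝ) ^ 2 :=
      div_nonneg hnum (by positivity)
    linarith
  refine ⟨?_, key⟩
  intro τ
  induction τ with
  | zero =>
    rw [hα0]
    exact mul_nonneg (by positivity) (Finset.sum_nonneg fun j _ => abs_nonneg _)
  | succ n ih =>
    have := key n
    nlinarith [sq_nonneg ((1 / (m : ℝ)) * ∑ j, B n j)]
end

section
/- Let m ≥ 1 and w ∈ ℝ^m, and define the ARB iterates: μ⁰ = (1/m)Σ_j w_j, B⁰ = sign(w − μ⁰𝟙), α⁰ = (1/m)Σ_j |w_j − μ⁰|, and for τ ≥ 0: μ^{τ+1} = (1/m)Σ_j (w_j − α^τ B^τ_j), α^{τ+1} = (1/m)⟨B^τ, w − μ^{τ+1}𝟙⟩, B^{τ+1} = sign(w − μ^{τ+1}𝟙). Define L⁰ = ‖w − α⁰B⁰ − μ⁰𝟙‖² and, for τ ≥ 1, L^τ = ‖w − α^τ B^{τ−1} − μ^τ𝟙‖². Then the sequence (L^τ)_{τ≥0} is nonincreasing; in particular L^τ ≤ L⁰ for every τ ≥ 0. -/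
lemma quadmin (M S2 S c t : ℝ) (hM : 0 < M) (hc : M * c = S) :
    S2 - 2*c*S + M*c^2 ≤ S2 - 2*t*S + M*t^2 := by
  have h1 : c*S = M*c^2 := by rw [← hc]; ring
  have h2 : t*S = M*(c*t) := by rw [← hc]; ring
  nlinarith [mul_nonneg hM.le (sq_nonneg (c - t))]

lemma expand_sum (m : ℕ) (v : Fin m → ℝ) (u : ℝ) :
    ∑ j, (v j - u)^2 = (∑ j, (v j)^2) - 2*u*(∑ j, v j) + m*u^2 := by
  have h : ∀ j, (v j - u)^2 = (v j)^2 - 2*u*(v j) + u^2 := fun j => by ring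
  simp_rw [h, Finset.sum_add_distrib, Finset.sum_sub_distrib, ← Finset.mul_sum,
    Finset.sum_const, Finset.card_univ, Fintype.card_fin, nsmul_eq_mul]

lemma meanA (m : ℕ) (hm : 1 ≤ m) (v : Fin m → ℝ) (t : ℝ) :
    ∑ j, (v j - (1/(m:ℝ)) * ∑ i, v i)^2 ≤ ∑ j, (v j - t)^2 := by
  have hm0 : (0:ℝ) < m := by exact_mod_cast Nat.lt_of_lt_of_le Nat.zero_lt_one hm
  rw [expand_sum, expand_sum]
  exact quadmin _ _ _ _ _ hm0 (by field_simp)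

lemma expand_sumB (m : ℕ) (x Bv : Fin m → ℝ) (hB2 : ∑ j, (Bv j)^2 = m) (u : ℝ) :
    ∑ j, (x j - u * Bv j)^2
      = (∑ j, (x j)^2) - 2*u*(∑ j, Bv j * x j) + m*u^2 := by
  have h : ∀ j, (x j - u * Bv j)^2
      = (x j)^2 - 2*u*(Bv j * x j) + u^2 * (Bv j)^2 := fun j => by ring
  simp_rw [h, Finset.sum_add_distrib, Finset.sum_sub_distrib, ← Finset.mul_sum, hB2]
  ring

lemma alphaB (m : ℕ) (hm : 1 ≤ m) (x Bv : Fin m → ℝ) (hB2 : ∑ j, (Bv j)^2 = m) (a : ℝ) :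
    ∑ j, (x j - ((1/(m:ℝ)) * ∑ i, Bv i * x i) * Bv j)^2 ≤ ∑ j, (x j - a * Bv j)^2 := by
  have hm0 : (0:ℝ) < m := by exact_mod_cast Nat.lt_of_lt_of_le Nat.zero_lt_one hm
  rw [expand_sumB m x Bv hB2, expand_sumB m x Bv hB2]
  exact quadmin _ _ _ _ _ hm0 (by field_simp)

lemma Cpt (a x b : ℝ) (ha : 0 ≤ a) (hb : b = 1 ∨ b = -1) :
    (x - a * (if 0 ≤ x then (1:ℝ) else -1))^2 ≤ (x - a*b)^2 := by
  by_cases hx : 0 ≤ x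
  · rcases hb with rfl | rfl <;> simp [hx] <;> nlinarith [mul_nonneg ha hx]
  · have hx' : x < 0 := lt_of_not_ge hx
    rcases hb with rfl | rfl <;> simp [hx] <;> nlinarith [mul_nonpos_of_nonneg_of_nonpos ha hx'.le]



/-- Inequality part of Theorem 1 (ARB): the quantization errors `L^τ` along the
alternating refined binarization iterates form a nonincreasing sequence; in
particular `L^τ ≤ L⁰` for every `τ`. -/
theorem arb_error_nonincreasing (m : ℕ) (hm : 1 ≤ m)
    (w : EuclideanSpace ℝ (Fin m))
    (ones : EuclideanSpace ℝ (Fin m)) (hones : ∀ j, ones j = 1)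
    (μ α : ℕ → ℝ) (B : ℕ → EuclideanSpace ℝ (Fin m))
    (hμ0 : μ 0 = (1 / (m : ℝ)) * ∑ j, w j)
    (hB : ∀ τ, ∀ j, B τ j = if 0 ≤ w j - μ τ then 1 else -1)
    (hα0 : α 0 = (1 / (m : ℝ)) * ∑ j, |w j - μ 0|)
    (hμ : ∀ τ, μ (τ + 1) = (1 / (m : ℝ)) * ∑ j, (w j - α τ * B τ j))
    (hα : ∀ τ, α (τ + 1) = (1 / (m : ℝ)) * ∑ j, B τ j * (w j - μ (τ + 1)))
    (L : ℕ → ℝ)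
    (hL0 : L 0 = ‖w - α 0 • B 0 - μ 0 • ones‖ ^ 2)
    (hL : ∀ τ, L (τ + 1) = ‖w - α (τ + 1) • B τ - μ (τ + 1) • ones‖ ^ 2) :
    (∀ τ, L (τ + 1) ≤ L τ) ∧ (∀ τ, L τ ≤ L 0) := by
  have hm0 : (0:ℝ) < m := by exact_mod_cast Nat.lt_of_lt_of_le Nat.zero_lt_one hm
  -- norms as sums
  have key : ∀ (a c : ℝ) (V : EuclideanSpace ℝ (Fin m)),
      ‖w - a • V - c • ones‖^2 = ∑ j, (w j - a * V j - c)^2 := by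
    intro a c V
    rw [EuclideanSpace.norm_eq, Real.sq_sqrt (by positivity)]
    refine Finset.sum_congr rfl fun j _ => ?_
    simp [hones j, Real.norm_eq_abs, sq_abs]
  have hBval : ∀ τ j, B τ j = 1 ∨ B τ j = -1 := by
    intro τ j; rw [hB]; split <;> simp
  have hBsq : ∀ τ, ∑ j, (B τ j)^2 = (m:ℝ) := by
    intro τ
    have : ∀ j, (B τ j)^2 = 1 := by
      intro j; rcases hBval τ j with h | h <;> rw [h] <;> norm_num
    simp [this]
  have hBabs : ∀ τ j, |B τ j| = 1 := by
    intro τ j; rcases hBval τ j with h | h <;> rw [h] <;> norm_num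
  have hBd : ∀ τ j, B τ j * (w j - μ τ) = |w j - μ τ| := by
    intro τ j; rw [hB]
    split <;> rename_i h
    · rw [abs_of_nonneg h]; ring
    · rw [abs_of_neg (lt_of_not_ge h)]; ring
  -- α is nonnegative
  have αnn : ∀ τ, 0 ≤ α τ := by
    intro τ
    induction τ with
    | zero =>
      rw [hα0]
      exact mul_nonneg (by positivity) (Finset.sum_nonneg fun j _ => abs_nonneg _)
    | succ τ ih =>
      rw [hα τ]
      set t : ℝ := 1/(m:ℝ) with ht
      have ht0 : 0 < t := by positivity
      have htm : t * m = 1 := by rw [ht, one_div, inv_mul_cancel₀ hm0.ne']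
      set s : ℝ := ∑ j, B τ j with hs
      set D : ℝ := ∑ j, (w j - μ τ) with hD
      set A : ℝ := ∑ j, |w j - μ τ| with hA
      have hDA : |D| ≤ A := Finset.abs_sum_le_sum_abs _ _
      have hsm : |s| ≤ m := by
        calc |s| ≤ ∑ j, |B τ j| := Finset.abs_sum_le_sum_abs _ _
          _ = m := by simp [hBabs]
      have hA0 : 0 ≤ A := Finset.sum_nonneg fun j _ => abs_nonneg _
      have hμτ : μ τ - μ (τ+1) = -t*D + α τ * s * t := by
        rw [hμ τ]
        have h1 : ∑ j, (w j - α τ * B τ j) = (∑ j, w j) - α τ * s := by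
          rw [Finset.sum_sub_distrib, ← Finset.mul_sum]
        have h2 : D = (∑ j, w j) - m * μ τ := by
          rw [hD, Finset.sum_sub_distrib, Finset.sum_const, Finset.card_univ,
            Fintype.card_fin, nsmul_eq_mul]
        rw [h1, ht]
        field_simp
        nlinarith [h2]
      have hsum : ∑ j, B τ j * (w j - μ (τ+1)) = A - t*D*s + α τ * s^2 * t := by
        have h1 : ∀ j, B τ j * (w j - μ (τ+1))
            = B τ j * (w j - μ τ) + (μ τ - μ (τ+1)) * B τ j := fun j => by ring
        rw [Finset.sum_congr rfl fun j _ => h1 j, Finset.sum_add_distrib,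
          ← Finset.mul_sum, Finset.sum_congr rfl fun j _ => hBd τ j, ← hA, ← hs, hμτ]
        ring
      rw [hsum]
      have hts : t*D*s ≤ A := by
        have e1 : t*D*s ≤ t*(|D| * |s|) := by
          have : D*s ≤ |D * s| := le_abs_self _
          rw [abs_mul] at this
          calc t*D*s = t*(D*s) := by ring
            _ ≤ t*(|D| * |s|) := by exact mul_le_mul_of_nonneg_left this ht0.le
        have e2 : t*(|D| * |s|) ≤ t*(A*m) := by
          apply mul_le_mul_of_nonneg_left _ ht0.le
          exact mul_le_mul hDA hsm (abs_nonneg _) hA0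
        have e3 : t*(A*m) = A := by
          calc t*(A*m) = A*(t*m) := by ring
            _ = A := by rw [htm, mul_one]
        linarith
      have hast : 0 ≤ α τ * s^2 * t :=
        mul_nonneg (mul_nonneg ih (sq_nonneg s)) ht0.le
      have : 0 ≤ A - t*D*s + α τ * s^2 * t := by linarith
      exact mul_nonneg ht0.le this
  -- step A: optimizing α
  have stepA : ∀ τ, (∑ j, (w j - α (τ+1) * B τ j - μ (τ+1))^2)
      ≤ ∑ j, (w j - α τ * B τ j - μ (τ+1))^2 := by
    intro τ
    have h := alphaB m hm (fun j => w j - μ (τ+1)) (fun j => B τ j) (hBsq τ) (α τ)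
    have e1 : ∑ j, (w j - α (τ+1) * B τ j - μ (τ+1))^2
        = ∑ j, ((w j - μ (τ+1)) - ((1/(m:ℝ)) * ∑ i, B τ i * (w i - μ (τ+1))) * B τ j)^2 := by
      rw [hα τ]
      exact Finset.sum_congr rfl fun j _ => by ring
    have e2 : ∑ j, (w j - α τ * B τ j - μ (τ+1))^2
        = ∑ j, ((w j - μ (τ+1)) - α τ * B τ j)^2 :=
      Finset.sum_congr rfl fun j _ => by ring
    rw [e1, e2]
    exact h
  -- step B: optimizing μ
  have stepB : ∀ τ, (∑ j, (w j - α τ * B τ j - μ (τ+1))^2)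
      ≤ ∑ j, (w j - α τ * B τ j - μ τ)^2 := by
    intro τ
    have h := meanA m hm (fun j => w j - α τ * B τ j) (μ τ)
    rwa [← hμ τ] at h
  -- step C: optimizing B (sign)
  have stepC : ∀ σ, (∑ j, (w j - α (σ+1) * B (σ+1) j - μ (σ+1))^2)
      ≤ ∑ j, (w j - α (σ+1) * B σ j - μ (σ+1))^2 := by
    intro σ
    refine Finset.sum_le_sum fun j _ => ?_
    have h := Cpt (α (σ+1)) (w j - μ (σ+1)) (B σ j) (αnn (σ+1)) (hBval σ j)
    have e1 : w j - α (σ+1) * B (σ+1) j - μ (σ+1)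
        = (w j - μ (σ+1)) - α (σ+1) * (if 0 ≤ w j - μ (σ+1) then (1:ℝ) else -1) := by
      rw [← hB]; ring
    have e2 : w j - α (σ+1) * B σ j - μ (σ+1)
        = (w j - μ (σ+1)) - α (σ+1) * B σ j := by ring
    rw [e1, e2]
    exact h
  have main : ∀ τ, L (τ+1) ≤ L τ := by
    intro τ
    cases τ with
    | zero =>
      rw [hL 0, hL0, key, key]
      exact le_trans (stepA 0) (stepB 0)
    | succ σ =>
      rw [hL (σ+1), hL σ, key, key]
      exact le_trans (stepA (σ+1)) (le_trans (stepB (σ+1)) (stepC σ))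
  refine ⟨main, fun τ => ?_⟩
  induction τ with
  | zero => exact le_refl _
  | succ τ ih => exact le_trans (main τ) ih
end

section
/- Let W be a real n×m matrix, B ∈ {−1,+1}^{n×m}, and α^r ∈ ℝ^n with ‖α^r‖ > 0. Define α^c ∈ ℝ^m by α^c_j = (Σ_{i=1}^n W_{ij} B_{ij} α^r_i) / (Σ_{i=1}^n (α^r_i)²). Then for every γ ∈ ℝ^m, Σ_{i,j} (W_{ij} − α^r_i α^c_j B_{ij})² ≤ Σ_{i,j} (W_{ij} − α^r_i γ_j B_{ij})²; that is, α^c minimizes the row–column binarization error over all column scaling vectors for fixed α^r and B. -/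
/-- ARB-RC column update: for fixed row scaling `α^r` (with `‖α^r‖ > 0`) and
binary matrix `B`, the closed-form `α^c` minimizes the row–column binarization
error over all column scaling vectors. -/
theorem arbrc_column_update (n m : ℕ)
    (W : Matrix (Fin n) (Fin m) ℝ)
    (B : Matrix (Fin n) (Fin m) ℝ) (hB : ∀ i j, B i j = 1 ∨ B i j = -1)
    (αr : EuclideanSpace ℝ (Fin n)) (hαr : 0 < ‖αr‖)
    (αc : Fin m → ℝ)
    (hαc : ∀ j, αc j = (∑ i, W i j * B i j * αr i) / (∑ i, (αr i) ^ 2)) :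
    ∀ γ : Fin m → ℝ,
      (∑ i, ∑ j, (W i j - αr i * αc j * B i j) ^ 2) ≤
      (∑ i, ∑ j, (W i j - αr i * γ j * B i j) ^ 2) := by
  intro γ
  -- S > 0
  have hne : αr ≠ 0 := fun h => by simp [h] at hαr
  have hS : 0 < ∑ i, (αr i) ^ 2 := by
    have hex : ∃ i, αr i ≠ 0 := by
      by_contra h
      push_neg at h
      exact hne (PiLp.ext (by simpa using h))
    obtain ⟨i0, hi0⟩ := hex
    have : (0:ℝ) < (αr i0) ^ 2 := by positivity
    exact lt_of_lt_of_le this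
      (Finset.single_le_sum (f := fun i => (αr i)^2)
        (fun i _ => by positivity) (Finset.mem_univ i0))
  rw [Finset.sum_comm, Finset.sum_comm (s := Finset.univ)
    (f := fun i j => (W i j - αr i * γ j * B i j) ^ 2)]
  apply Finset.sum_le_sum
  intro j _
  set S := ∑ i, (αr i) ^ 2 with hSdef
  set T := ∑ i, W i j * B i j * αr i with hTdef
  -- expansion identity
  have hexp : ∀ c : ℝ,
      (∑ i, (W i j - αr i * c * B i j) ^ 2)
        = (∑ i, (W i j) ^ 2) - 2 * c * T + c ^ 2 * S := by
    intro c
    rw [hTdef, hSdef, Finset.mul_sum, Finset.mul_sum, ← Finset.sum_sub_distrib,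
      ← Finset.sum_add_distrib]
    apply Finset.sum_congr rfl
    intro i _
    have hB2 : (B i j) ^ 2 = 1 := by rcases hB i j with h | h <;> rw [h] <;> norm_num
    linear_combination (αr i)^2 * c^2 * hB2
  rw [hexp, hexp, hαc j]
  have h1 : (0:ℝ) ≤ (γ j * S - T) ^ 2 := sq_nonneg _
  have hS' : S ≠ 0 := ne_of_gt hS
  have key : -2 * (T / S) * T + (T / S) ^ 2 * S
      = -2 * γ j * T + (γ j) ^ 2 * S - (γ j * S - T) ^ 2 / S := by
    field_simp
    ring
  have hd : 0 ≤ (γ j * S - T) ^ 2 / S := div_nonneg h1 hS.le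
  have : -2 * (T / S) * T + (T / S) ^ 2 * S ≤ -2 * γ j * T + (γ j) ^ 2 * S := by
    rw [key]; linarith
  linarith
end

section
/- Let W be a real n×m matrix and B ∈ {−1,+1}^{n×m}. Define the alternating updates: given (α^r, α^c) with ‖α^c‖ > 0, the row update sets α^r_i ← (Σ_j W_{ij}B_{ij}α^c_j)/‖α^c‖²; given (α^r, α^c) with ‖α^r‖ > 0, the column update sets α^c_j ← (Σ_i W_{ij}B_{ij}α^r_i)/‖α^r‖². Then the quantization error L₁(α^r, α^c) = Σ_{i,j}(W_{ij} − α^r_i α^c_j B_{ij})² does not increase under either update; consequently, for any sequence of iterates produced by alternately applying these two updates (with the relevant norm positive at each step), the sequence of errors is nonincreasing. -/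
lemma quad_min {k : ℕ} (c w : Fin k → ℝ) (hs : 0 < ∑ j, c j ^ 2) (x : ℝ) :
    ∑ j, (w j - ((∑ j, w j * c j) / (∑ j, c j ^ 2)) * c j) ^ 2
      ≤ ∑ j, (w j - x * c j) ^ 2 := by
  set s := ∑ j, c j ^ 2 with hsdef
  set p := ∑ j, w j * c j with hpdef
  have expand : ∀ y : ℝ, ∑ j, (w j - y * c j) ^ 2
      = (∑ j, w j ^ 2) - 2 * y * p + y ^ 2 * s := by
    intro y
    have h : ∀ j, (w j - y * c j) ^ 2 = w j ^ 2 - 2 * y * (w j * c j) + y ^ 2 * c j ^ 2 := by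
      intro j; ring
    simp_rw [h, Finset.sum_add_distrib, Finset.sum_sub_distrib, ← Finset.mul_sum]
    rw [hpdef, hsdef]
  rw [expand, expand]
  have h1 : (p / s) * s = p := by field_simp
  have h2 : (p / s) ^ 2 * s = (p / s) * p := by rw [sq, mul_assoc, h1]
  nlinarith [sq_nonneg (x * s - p), hs, sq_nonneg (x - p / s),
    mul_nonneg hs.le (sq_nonneg (x - p / s)), h1, h2]

lemma eucl_norm_sq {k : ℕ} (x : EuclideanSpace ℝ (Fin k)) : ‖x‖ ^ 2 = ∑ j, x j ^ 2 := by
  rw [EuclideanSpace.norm_eq, Real.sq_sqrt (by positivity)]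
  simp [sq_abs]



/-- Row–column binarization error `L₁(α^r, α^c) = Σ_{i,j}(W_{ij} − α^r_i α^c_j B_{ij})²`. -/
noncomputable def arbrcError {n m : ℕ} (W B : Matrix (Fin n) (Fin m) ℝ)
    (αr : EuclideanSpace ℝ (Fin n)) (αc : EuclideanSpace ℝ (Fin m)) : ℝ :=
  ∑ i, ∑ j, (W i j - αr i * αc j * B i j) ^ 2

/-- ARB-RC row update `α^r_i ← (Σ_j W_{ij}B_{ij}α^c_j)/‖α^c‖²`. -/
noncomputable def arbrcRowUpdate {n m : ℕ} (W B : Matrix (Fin n) (Fin m) ℝ)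
    (αc : EuclideanSpace ℝ (Fin m)) : EuclideanSpace ℝ (Fin n) :=
  WithLp.toLp 2 (fun i => (∑ j, W i j * B i j * αc j) / ‖αc‖ ^ 2)

/-- ARB-RC column update `α^c_j ← (Σ_i W_{ij}B_{ij}α^r_i)/‖α^r‖²`. -/
noncomputable def arbrcColUpdate {n m : ℕ} (W B : Matrix (Fin n) (Fin m) ℝ)
    (αr : EuclideanSpace ℝ (Fin n)) : EuclideanSpace ℝ (Fin m) :=
  WithLp.toLp 2 (fun j => (∑ i, W i j * B i j * αr i) / ‖αr‖ ^ 2)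

/-- The ARB-RC alternating updates never increase the quantization error `L₁`;
consequently, along any sequence of iterates produced by alternately applying
the row and column updates, the errors are nonincreasing. -/
theorem arbrc_alternating_nonincreasing (n m : ℕ)
    (W B : Matrix (Fin n) (Fin m) ℝ) (hB : ∀ i j, B i j = 1 ∨ B i j = -1) :
    (∀ (αr : EuclideanSpace ℝ (Fin n)) (αc : EuclideanSpace ℝ (Fin m)),
      0 < ‖αc‖ → arbrcError W B (arbrcRowUpdate W B αc) αc ≤ arbrcError W B αr αc) ∧
    (∀ (αr : EuclideanSpace ℝ (Fin n)) (αc : EuclideanSpace ℝ (Fin m)),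
      0 < ‖αr‖ → arbrcError W B αr (arbrcColUpdate W B αr) ≤ arbrcError W B αr αc) ∧
    (∀ a : ℕ → EuclideanSpace ℝ (Fin n) × EuclideanSpace ℝ (Fin m),
      (∀ t, (0 < ‖(a t).2‖ ∧ a (t + 1) = (arbrcRowUpdate W B (a t).2, (a t).2)) ∨
            (0 < ‖(a t).1‖ ∧ a (t + 1) = ((a t).1, arbrcColUpdate W B (a t).1))) →
      ∀ s t : ℕ, s ≤ t →
        arbrcError W B (a t).1 (a t).2 ≤ arbrcError W B (a s).1 (a s).2) := by
  have hB2 : ∀ i j, (B i j) ^ 2 = 1 := by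
    intro i j; rcases hB i j with h | h <;> simp [h]
  have row : ∀ (αr : EuclideanSpace ℝ (Fin n)) (αc : EuclideanSpace ℝ (Fin m)),
      0 < ‖αc‖ → arbrcError W B (arbrcRowUpdate W B αc) αc ≤ arbrcError W B αr αc := by
    intro αr αc hαc
    unfold arbrcError arbrcRowUpdate
    apply Finset.sum_le_sum
    intro i _
    have hcs : ∑ j, (αc j * B i j) ^ 2 = ∑ j, αc j ^ 2 := by
      refine Finset.sum_congr rfl fun j _ => ?_
      rw [mul_pow, hB2, mul_one]
    have hpos : 0 < ∑ j, (αc j * B i j) ^ 2 := by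
      rw [hcs, ← eucl_norm_sq]; positivity
    have key := quad_min (fun j => αc j * B i j) (fun j => W i j) hpos (αr i)
    simp only at key
    have e1 : (‖αc‖ : ℝ) ^ 2 = ∑ j, (αc j * B i j) ^ 2 := by rw [eucl_norm_sq, hcs]
    have e2 : ∀ j, W i j * B i j * αc j = W i j * (αc j * B i j) := fun j => by ring
    calc ∑ j, (W i j - (∑ j, W i j * B i j * αc j) / ‖αc‖ ^ 2 * αc j * B i j) ^ 2
        = ∑ j, (W i j - (∑ j, W i j * (αc j * B i j)) / (∑ j, (αc j * B i j) ^ 2)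
            * (αc j * B i j)) ^ 2 := by
          rw [e1]; simp_rw [e2, mul_assoc]
      _ ≤ ∑ j, (W i j - αr i * (αc j * B i j)) ^ 2 := key
      _ = ∑ j, (W i j - αr i * αc j * B i j) ^ 2 := by simp_rw [mul_assoc]
  have col : ∀ (αr : EuclideanSpace ℝ (Fin n)) (αc : EuclideanSpace ℝ (Fin m)),
      0 < ‖αr‖ → arbrcError W B αr (arbrcColUpdate W B αr) ≤ arbrcError W B αr αc := by
    intro αr αc hαr
    unfold arbrcError arbrcColUpdate
    rw [Finset.sum_comm]
    rw [Finset.sum_comm (s := Finset.univ) (t := Finset.univ)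
      (f := fun i j => (W i j - αr i * αc j * B i j) ^ 2)]
    apply Finset.sum_le_sum
    intro j _
    have hcs : ∑ i, (αr i * B i j) ^ 2 = ∑ i, αr i ^ 2 := by
      refine Finset.sum_congr rfl fun i _ => ?_
      rw [mul_pow, hB2, mul_one]
    have hpos : 0 < ∑ i, (αr i * B i j) ^ 2 := by
      rw [hcs, ← eucl_norm_sq]; positivity
    have key := quad_min (fun i => αr i * B i j) (fun i => W i j) hpos (αc j)
    simp only at key
    have e1 : (‖αr‖ : ℝ) ^ 2 = ∑ i, (αr i * B i j) ^ 2 := by rw [eucl_norm_sq, hcs]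
    have e2 : ∀ i, W i j * B i j * αr i = W i j * (αr i * B i j) := fun i => by ring
    calc ∑ i, (W i j - αr i * ((∑ i, W i j * B i j * αr i) / ‖αr‖ ^ 2) * B i j) ^ 2
        = ∑ i, (W i j - (∑ i, W i j * (αr i * B i j)) / (∑ i, (αr i * B i j) ^ 2)
            * (αr i * B i j)) ^ 2 := by
          rw [e1]
          refine Finset.sum_congr rfl fun i _ => ?_
          simp_rw [e2]; ring
      _ ≤ ∑ i, (W i j - αc j * (αr i * B i j)) ^ 2 := key
      _ = ∑ i, (W i j - αr i * αc j * B i j) ^ 2 := by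
          refine Finset.sum_congr rfl fun i _ => ?_; ring
  refine ⟨row, col, ?_⟩
  intro a ha s t hst
  induction t, hst using Nat.le_induction with
  | base => exact le_refl _
  | succ t hst ih =>
    refine le_trans ?_ ih
    rcases ha t with ⟨h1, h2⟩ | ⟨h1, h2⟩
    · rw [h2]; exact row (a t).1 (a t).2 h1
    · rw [h2]; exact col (a t).1 (a t).2 h1
end

section
/- Let m ≥ 1, u ∈ ℝ^m, B₁, B₂ ∈ {−1,+1}^m, and α₁, α₂ ∈ ℝ. Define the refined scaling factors α̃₁ = (1/m)·⟨B₁, u − α₂B₂⟩ and α̃₂ = (1/m)·⟨B₂, u − α̃₁B₁⟩. Then ‖u − α̃₁B₁ − α̃₂B₂‖² = ‖u − α₁B₁ − α₂B₂‖² − m·((α̃₁ − α₁)² + (α̃₂ − α₂)²); in particular the second-order binarization error does not increase after sequentially refining α₁ and then α₂. -/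
open scoped RealInnerProductSpace

/-- Second-order ARB scaling refinement: sequentially refining `α₁` and then
`α₂` decreases the second-order binarization error by exactly
`m·((α̃₁ − α₁)² + (α̃₂ − α₂)²)`. -/
theorem arb_second_order_alpha_refinement (m : ℕ) (hm : 1 ≤ m)
    (u B₁ B₂ : EuclideanSpace ℝ (Fin m))
    (hB₁ : ∀ j, B₁ j = 1 ∨ B₁ j = -1)
    (hB₂ : ∀ j, B₂ j = 1 ∨ B₂ j = -1)
    (α₁ α₂ : ℝ)
    (α₁' : ℝ) (hα₁' : α₁' = (1 / (m : ℝ)) * ⟪B₁, u - α₂ • B₂⟫)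
    (α₂' : ℝ) (hα₂' : α₂' = (1 / (m : ℝ)) * ⟪B₂, u - α₁' • B₁⟫) :
    ‖u - α₁' • B₁ - α₂' • B₂‖ ^ 2 =
      ‖u - α₁ • B₁ - α₂ • B₂‖ ^ 2 - m * ((α₁' - α₁) ^ 2 + (α₂' - α₂) ^ 2) := by
  have hm0 : (m : ℝ) ≠ 0 := by positivity
  have hBB₁ : ⟪B₁, B₁⟫ = (m : ℝ) := by
    simp only [PiLp.inner_apply, RCLike.inner_apply, conj_trivial]
    have : ∀ j, B₁ j * B₁ j = 1 := by
      intro j; rcases hB₁ j with h | h <;> rw [h] <;> ring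
    simp [this]
  have hBB₂ : ⟪B₂, B₂⟫ = (m : ℝ) := by
    simp only [PiLp.inner_apply, RCLike.inner_apply, conj_trivial]
    have : ∀ j, B₂ j * B₂ j = 1 := by
      intro j; rcases hB₂ j with h | h <;> rw [h] <;> ring
    simp [this]
  have h1 : (m : ℝ) * α₁' = ⟪B₁, u⟫ - α₂ * ⟪B₁, B₂⟫ := by
    rw [hα₁', inner_sub_right, inner_smul_right]
    field_simp
  have h2 : (m : ℝ) * α₂' = ⟪B₂, u⟫ - α₁' * ⟪B₁, B₂⟫ := by
    rw [hα₂', inner_sub_right, inner_smul_right, real_inner_comm B₂ B₁]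
    field_simp
  have expand : ∀ a b : ℝ, ‖u - a • B₁ - b • B₂‖ ^ 2 =
      ⟪u, u⟫ - 2 * a * ⟪B₁, u⟫ - 2 * b * ⟪B₂, u⟫
        + a ^ 2 * m + b ^ 2 * m + 2 * a * b * ⟪B₁, B₂⟫ := by
    intro a b
    rw [← real_inner_self_eq_norm_sq]
    simp only [inner_sub_left, inner_sub_right, inner_smul_left, inner_smul_right,
      conj_trivial, hBB₁, hBB₂, real_inner_comm B₂ B₁, real_inner_comm u B₁,
      real_inner_comm u B₂]
    ring
  rw [expand, expand]
  linear_combination (2*(α₁' - α₁)) * h1 + (2*(α₂' - α₂)) * h2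
end

section
/- Let α₁ ≥ α₂ ≥ 0 be real numbers, and for x ∈ ℝ define sign(x) = 1 if x ≥ 0 and −1 otherwise. Set b₁ = sign(x) and b₂ = sign(x − α₁b₁). Then for all b₁', b₂' ∈ {−1,+1}, |x − α₁b₁ − α₂b₂| ≤ |x − α₁b₁' − α₂b₂'|; that is, the greedy residual sign assignment attains the nearest point to x among the four candidate values {−α₁−α₂, −α₁+α₂, α₁−α₂, α₁+α₂}. -/
/-- Greedy residual sign assignment for second-order binarization: for
`α₁ ≥ α₂ ≥ 0`, setting `b₁ = sign(x)` and `b₂ = sign(x − α₁b₁)` attains the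
nearest point to `x` among the four candidates `±α₁ ± α₂`. -/
theorem greedy_sign_optimal (α₁ α₂ : ℝ) (hα₂ : 0 ≤ α₂) (hα₁ : α₂ ≤ α₁)
    (x : ℝ)
    (b₁ : ℝ) (hb₁ : b₁ = if 0 ≤ x then 1 else -1)
    (b₂ : ℝ) (hb₂ : b₂ = if 0 ≤ x - α₁ * b₁ then 1 else -1) :
    ∀ b₁' b₂' : ℝ, (b₁' = 1 ∨ b₁' = -1) → (b₂' = 1 ∨ b₂' = -1) →
      |x - α₁ * b₁ - α₂ * b₂| ≤ |x - α₁ * b₁' - α₂ * b₂'| := by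
  intro b₁' b₂' h1 h2
  rcases h1 with rfl | rfl <;> rcases h2 with rfl | rfl <;>
    split_ifs at hb₁ with h <;> subst hb₁ <;>
    split_ifs at hb₂ with h' <;> subst hb₂ <;>
    rcases abs_cases (x - α₁ * 1 - α₂ * 1) with ⟨e1, _⟩ | ⟨e1, _⟩ <;>
    rcases abs_cases (x - α₁ * 1 - α₂ * (-1)) with ⟨e2, _⟩ | ⟨e2, _⟩ <;>
    rcases abs_cases (x - α₁ * (-1) - α₂ * 1) with ⟨e3, _⟩ | ⟨e3, _⟩ <;>
    rcases abs_cases (x - α₁ * (-1) - α₂ * (-1)) with ⟨e4, _⟩ | ⟨e4, _⟩ <;>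
    simp only [e1, e2, e3, e4] <;> linarith
end
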